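/- arXiv:2407.16513 — 6 statements merged into one kernel-verified Lean document; each statement's English description precedes it below -/
import Mathlib

section
/- Let f and g be Boolean operations of the same arity with g = g^d and f ≤ f^d. Define h = (g ∨ f) ∧ f^d. Then f ≤ h and h = h^d. -/
/-- An `n`-ary Boolean operation. -/
def BOp (n : ℕ) : Type := (Fin n → Bool) → Bool

/-- `Tri f g` means `f ⊴ g`: `f a ≤ g b` whenever `a ≤ b` componentwise. -/
def Tri {n : ℕ} (f g : BOp n) : Prop :=
  ∀ a b : Fin n → Bool, (∀ i, a i ≤ b i) → f a ≤ g b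

/-- `f` is monotone with respect to the componentwise order. -/
def Mono {n : ℕ} (f : BOp n) : Prop :=
  ∀ a b : Fin n → Bool, (∀ i, a i ≤ b i) → f a ≤ f b

/-- The dual of a Boolean operation: `f^d a = ¬ f ā`. -/
def Dual {n : ℕ} (f : BOp n) : BOp n := fun a => !(f (fun i => !(a i)))

theorem interval_projection {n : ℕ} (f g : BOp n)
    (hg : g = Dual g) (hf : ∀ a, f a ≤ Dual f a) :
    (∀ a, f a ≤ ((g a || f a) && Dual f a)) ∧
    (fun a => (g a || f a) && Dual f a) = Dual (fun a => (g a || f a) && Dual f a) := by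
  constructor
  · intro a
    have h1 := hf a
    cases e1 : f a
    · simp
    · rw [e1] at h1; simp only [Dual] at h1
      simp [Dual, h1]
  · funext a
    have hga := congrFun hg a
    have h1 := hf a
    have h2 := hf (fun i => !(a i))
    simp only [Dual] at *
    have hnn : (fun i => !(!(a i))) = a := by funext i; simp
    rw [hnn] at h2 ⊢
    have hga' : g (fun i => !(a i)) = !(g a) := by rw [hga]; simp
    cases e1 : f a <;> cases e2 : f (fun i => !(a i)) <;>
      cases e3 : g a <;> simp [e1, e2, e3, hga'] at h1 h2 ⊢ <;> exact absurd h1 (by decide)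
end

section
/- Let h be a 5-ary symmetric idempotent Boolean operation, and set a₁ = h(1,0,0,0,0), a₂ = h(1,1,0,0,0), a₃ = h(1,1,1,0,0), a₄ = h(1,1,1,1,0). Then h ⊴ h^d if and only if a₁ = a₂ = 0. -/
/-- Idempotency: `h(a,…,a) = a`. -/
def Idem {n : ℕ} (f : BOp n) : Prop := ∀ b : Bool, f (fun _ => b) = b

/-- Symmetry: invariance under all permutations of the arguments. -/
def Symm {n : ℕ} (h : BOp n) : Prop :=
  ∀ (σ : Equiv.Perm (Fin n)) (a : Fin n → Bool), h (a ∘ σ) = h a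

/-- The tuple with `k` ones followed by zeros. -/
def ones {n : ℕ} (k : ℕ) : Fin n → Bool := fun i => decide (i.val < k)

/-! A symmetric operation only sees the number of ones of its argument, so it is a function
`φ k = h (ones k)` of the weight, and `h^d` of a tuple of weight `m` is `¬ φ (n - m)`.
Hence `h ⊴ h^d` says that `φ k` and `φ j` are never both true when `k + j ≤ n`; taking `k = j`
and noting that one of `k, j` is at most `n / 2`, this means `φ` vanishes on `k ≤ n / 2`.
For `n = 5` that is `φ 0 = φ 1 = φ 2 = 0`, and `φ 0 = 0` is idempotency. -/

open Finset

variable {n : ℕ}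

def weight (a : Fin n → Bool) : ℕ := #{i | a i = true}

theorem weight_le (a : Fin n → Bool) : weight a ≤ n :=
  (card_filter_le _ _).trans (card_fin n).le

theorem weight_mono {a b : Fin n → Bool} (hab : ∀ i, a i ≤ b i) : weight a ≤ weight b :=
  card_le_card fun i => by simpa using fun hi => Bool.le_iff_imp.mp (hab i) hi

theorem weight_not (a : Fin n → Bool) : weight (fun i => !a i) = n - weight a := by
  have hsplit := card_filter_add_card_filter_not (s := univ) (fun i => a i = true)
  simp only [card_univ, Fintype.card_fin, Bool.not_eq_true] at hsplit
  simp only [weight, Bool.not_eq_true']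
  omega

theorem weight_ones {k : ℕ} (hk : k ≤ n) : weight (ones k : Fin n → Bool) = k := by
  simp [weight, ones, Fin.card_filter_val_lt, hk]

theorem ones_le_ones {k m : ℕ} (hkm : k ≤ m) (i : Fin n) :
    (ones k : Fin n → Bool) i ≤ ones m i := by
  simp only [ones, Bool.le_iff_imp, decide_eq_true_eq]
  omega

theorem ones_zero : (ones 0 : Fin n → Bool) = fun _ => false := by
  funext i; simp [ones]

namespace Symm

variable {h : BOp n}

theorem apply_eq_of_weight_eq (hs : Symm h) {a b : Fin n → Bool} (hab : weight a = weight b) :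
    h a = h b := by
  let e : {i // b i = true} ≃ {i // a i = true} :=
    Fintype.equivOfCardEq (by simpa only [Fintype.card_subtype, weight] using hab.symm)
  have hσ : a ∘ e.extendSubtype = b := funext fun i => by
    by_cases hb : b i = true
    · simpa [hb] using e.extendSubtype_mem i hb
    · simpa [hb] using e.extendSubtype_not_mem i hb
  rw [← hσ, hs]

theorem apply_eq_apply_ones (hs : Symm h) (a : Fin n → Bool) : h a = h (ones (weight a)) :=
  hs.apply_eq_of_weight_eq (weight_ones (weight_le a)).symm

theorem dual_apply (hs : Symm h) (b : Fin n → Bool) : Dual h b = !h (ones (n - weight b)) := by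
  rw [Dual, hs.apply_eq_apply_ones, weight_not]

theorem tri_dual_iff (hs : Symm h) : Tri h (Dual h) ↔ ∀ k, 2 * k ≤ n → h (ones k) = false := by
  constructor
  · intro htri k hk
    have hk_le := htri (ones k) (ones (n - k)) (ones_le_ones (by omega))
    rw [hs.dual_apply, weight_ones (by omega), Nat.sub_sub_self (by omega)] at hk_le
    revert hk_le
    cases h (ones k) <;> decide
  · intro hlow a b hab
    have hsum : weight a + (n - weight b) ≤ n := by
      have := weight_mono hab
      have := weight_le b
      omega
    rw [hs.apply_eq_apply_ones, hs.dual_apply]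
    by_cases ha : 2 * weight a ≤ n
    · exact hlow _ ha ▸ Bool.false_le _
    · rw [hlow (n - weight b) (by omega)]
      exact Bool.le_true _

end Symm

theorem symm5_tri_dual_iff (h : BOp 5) (hs : Symm h) (hi : Idem h) :
    Tri h (Dual h) ↔ (h (ones 1) = false ∧ h (ones 2) = false) := by
  have h0 : h (ones 0) = false := by rw [ones_zero, hi]
  rw [hs.tri_dual_iff]
  refine ⟨fun hlow => ⟨hlow 1 (by norm_num), hlow 2 (by norm_num)⟩, ?_⟩
  rintro ⟨h1, h2⟩ k hk
  have : k ≤ 2 := by omega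
  interval_cases k <;> assumption
end

section
/- Let h be a 5-ary symmetric idempotent Boolean operation with a₁ = h(10000), a₂ = h(11000), a₃ = h(11100), a₄ = h(11110). Then h ≤ h^d if and only if (a₁, a₄) ≠ (1,1) and (a₂, a₃) ≠ (1,1). -/
def cnt (a : Fin 5 → Bool) : ℕ := (Finset.univ.filter (fun i => a i = true)).card

set_option maxRecDepth 10000 in
lemma exists_perm : ∀ a : Fin 5 → Bool,
    ∃ σ : Equiv.Perm (Fin 5), (ones (cnt a) : Fin 5 → Bool) ∘ σ = a := by decide

lemma key (h : BOp 5) (hs : Symm h) (a : Fin 5 → Bool) : h a = h (ones (cnt a)) := by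
  obtain ⟨σ, hσ⟩ := exists_perm a
  have := hs σ (ones (cnt a))
  rw [hσ] at this
  exact this

lemma cnt_neg : ∀ a : Fin 5 → Bool, cnt (fun i => !(a i)) = 5 - cnt a := by decide

lemma cnt_le : ∀ a : Fin 5 → Bool, cnt a ≤ 5 := by decide

theorem symm5_le_dual_iff (h : BOp 5) (hs : Symm h) (hi : Idem h) :
    (∀ a, h a ≤ Dual h a) ↔
      (¬(h (ones 1) = true ∧ h (ones 4) = true) ∧
       ¬(h (ones 2) = true ∧ h (ones 3) = true)) := by
  have h0 : h (ones 0) = false := by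
    have : (ones 0 : Fin 5 → Bool) = fun _ => false := by funext i; simp [ones]
    rw [this, hi]
  have h5 : h (ones 5) = true := by
    have : (ones 5 : Fin 5 → Bool) = fun _ => true := by
      funext i; simp [ones, i.isLt]
    rw [this, hi]
  have dual_eq : ∀ a : Fin 5 → Bool, Dual h a = !(h (ones (5 - cnt a))) := by
    intro a
    unfold Dual
    rw [key h hs (fun i => !(a i)), cnt_neg]
  constructor
  · intro H
    constructor
    · rintro ⟨h1, h4⟩
      have := H (ones 1)
      rw [dual_eq, h1] at this
      have hc : cnt (ones 1 : Fin 5 → Bool) = 1 := by decide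
      rw [hc, show (5:ℕ)-1 = 4 from rfl, h4] at this
      exact absurd this (by decide)
    · rintro ⟨h2, h3⟩
      have := H (ones 2)
      rw [dual_eq, h2] at this
      have hc : cnt (ones 2 : Fin 5 → Bool) = 2 := by decide
      rw [hc, show (5:ℕ)-2 = 3 from rfl, h3] at this
      exact absurd this (by decide)
  · rintro ⟨H1, H2⟩ a
    rw [key h hs a, dual_eq]
    have hle := cnt_le a
    set k := cnt a with hk
    interval_cases k
    · rw [h0]; simp
    · cases e1 : h (ones 1) <;> cases e4 : h (ones 4) <;> simp_all
    · cases e2 : h (ones 2) <;> cases e3 : h (ones 3) <;> simp_all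
    · cases e2 : h (ones 2) <;> cases e3 : h (ones 3) <;> simp_all
    · cases e1 : h (ones 1) <;> cases e4 : h (ones 4) <;> simp_all
    · show h (ones 5) ≤ !(h (ones 0)); rw [h0, h5]; simp
end

section
/- There are exactly two 2-sorted 5-ary symmetric idempotent Boolean operations (h₁, h₂) satisfying h₁ ⊴ h₁, h₁ ⊴ h₂, h₂ = h₂^d, and the identity h_i(x,x,x,x,y) = h_i(x,x,y,y,y) for both i: namely the operation t with (t₁-values, t₂-values) on (10000,11000,11100,11110) equal to ((0,0,0,0),(0,1,0,1)), and the operation t' with values ((0,0,0,0),(1,0,1,0)). -/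
/-- The symmetric operation determined by a function of the number of  arguments. -/
def mkSym {n : ℕ} (v : ℕ → Bool) : BOp n :=
  fun a => v ((Finset.univ.filter (fun i => a i = true)).card)

/-! A symmetric operation only sees the number of ones in its argument, so `hᵢ` is determined
by the values `vᵢ k = hᵢ (ones k)`, `k ≤ 5`, with `vᵢ 0 = false` and `vᵢ 5 = true`. The identity
says `vᵢ 4 = vᵢ 2` and `vᵢ 1 = vᵢ 3`, so monotonicity of `h₁` makes `v₁` constant on `1, …, 4`.
Self-duality of `h₂` gives `v₂ 3 = !v₂ 2`, hence `v₂ 1 = v₂ 3` and `v₂ 2` are never both `true`,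
and `h₁ ⊴ h₂` then excludes the constant `true` for `v₁`. The only freedom left is `v₂ 2`. -/

open Finset

section

variable {n : ℕ}

lemma card_ones {k : ℕ} (hk : k ≤ n) : #{i | ones (n := n) k i = true} = k := by
  have : ({i | ones (n := n) k i = true} : Finset (Fin n)) =
      (range k).attachFin (fun m hm => (mem_range.mp hm).trans_le hk) := by
    ext i; simp [ones, mem_attachFin]
  rw [this, card_attachFin, card_range]

lemma card_filter_not (a : Fin n → Bool) : #{i | (!a i) = true} = n - #{i | a i = true} := by
  have : univ.filter (fun i => (!a i) = true) = (univ.filter fun i => a i = true)ᶜ := by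
    ext; simp
  rw [this, card_compl, Fintype.card_fin]

lemma Symm.apply_eq_of_card_eq {h : BOp n} (hs : Symm h) {a b : Fin n → Bool}
    (hab : #{i | a i = true} = #{i | b i = true}) : h a = h b := by
  obtain ⟨σ, hσ⟩ := Equiv.Perm.exists_map_finset_eq _ _ hab
  suffices a = b ∘ σ by rw [this, hs]
  funext i
  exact (show a i = b (σ i) by simpa using Finset.ext_iff.mp hσ (σ i))

lemma Symm.apply_eq_apply_ones_s16 {h : BOp n} (hs : Symm h) (a : Fin n → Bool) :
    h a = h (ones #{i | a i = true}) :=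
  hs.apply_eq_of_card_eq (card_ones (card_filter_le _ _ |>.trans (by simp))).symm

lemma Symm.eq_mkSym {h : BOp n} (hs : Symm h) {v : ℕ → Bool}
    (hv : ∀ k ≤ n, h (ones k) = v k) : h = mkSym v := by
  funext a
  rw [hs.apply_eq_apply_ones_s16 a, mkSym, hv _ (card_filter_le _ _ |>.trans (by simp))]

lemma Symm.apply_not_ones {h : BOp n} (hs : Symm h) {k : ℕ} (hk : k ≤ n) :
    h (fun i => !ones k i) = h (ones (n - k)) :=
  hs.apply_eq_of_card_eq (by rw [card_filter_not, card_ones hk, card_ones (Nat.sub_le n k)])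

lemma Idem.apply_ones_zero {h : BOp n} (hi : Idem h) : h (ones 0) = false := by
  unfold ones
  simpa using hi false

lemma Idem.apply_ones_self {h : BOp n} (hi : Idem h) : h (ones n) = true := by
  unfold ones
  simpa using hi true

lemma Tri.apply_ones_le {f g : BOp n} (ht : Tri f g) {k l : ℕ} (hkl : k ≤ l) :
    f (ones k) ≤ g (ones l) :=
  ht _ _ fun i => Bool.le_iff_imp.mpr fun h => by simp only [ones, decide_eq_true_eq] at h ⊢; omega

lemma Symm.apply_ones_eq_not_of_eq_dual {h : BOp n} (hs : Symm h) (hd : h = Dual h) {k : ℕ}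
    (hk : k ≤ n) : h (ones k) = !h (ones (n - k)) := by
  conv_lhs => rw [hd]
  rw [Dual, hs.apply_not_ones hk]

lemma Symm.apply_ones_eq_of_identity {h : BOp n} (hs : Symm h) {m m' : ℕ}
    (hm : m ≤ n) (hm' : m' ≤ n)
    (hid : ∀ x y : Bool,
      h (fun i => if i.val < m then x else y) = h (fun i => if i.val < m' then x else y)) :
    h (ones m) = h (ones m') ∧ h (ones (n - m)) = h (ones (n - m')) := by
  constructor
  · unfold ones
    simpa using hid true false
  · rw [← hs.apply_not_ones hm, ← hs.apply_not_ones hm']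
    simpa [ones] using hid false true

lemma symm_mkSym (v : ℕ → Bool) : Symm (mkSym (n := n) v) := by
  intro σ a
  simp only [mkSym]
  congr 1
  exact card_bij' (fun i _ => σ i) (fun j _ => σ.symm j) (by simp) (by simp) (by simp) (by simp)

lemma idem_mkSym {v : ℕ → Bool} (h0 : v 0 = false) (hn : v n = true) :
    Idem (mkSym (n := n) v) := by
  rintro (_ | _) <;> simp [mkSym, h0, hn]

lemma tri_mkSym {v w : ℕ → Bool} (hvw : ∀ l ≤ n, ∀ k ≤ l, v k ≤ w l) :
    Tri (mkSym (n := n) v) (mkSym w) := by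
  intro a b hab
  refine hvw _ (card_filter_le _ _ |>.trans (by simp)) _ (card_le_card fun i => ?_)
  simpa using fun hi => Bool.le_iff_imp.mp (hab i) hi

lemma mkSym_eq_dual {w : ℕ → Bool} (hw : ∀ k ≤ n, w k = !w (n - k)) :
    mkSym (n := n) w = Dual (mkSym w) := by
  funext a
  simp only [mkSym, Dual, card_filter_not]
  exact hw _ (card_filter_le _ _ |>.trans (by simp))

end

lemma apply_ones_middle_eq_false {h₁ h₂ : BOp 5} (t₁₁ : Tri h₁ h₁) (t₁₂ : Tri h₁ h₂)
    (v42 : h₁ (ones 4) = h₁ (ones 2)) (v13 : h₁ (ones 1) = h₁ (ones 3))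
    (w13 : h₂ (ones 1) = h₂ (ones 3)) (w32 : h₂ (ones 3) = !h₂ (ones 2)) :
    ∀ k, 1 ≤ k → k ≤ 4 → h₁ (ones k) = false := by
  have v12 := t₁₁.apply_ones_le (show 1 ≤ 2 by norm_num)
  have v23 := t₁₁.apply_ones_le (show 2 ≤ 3 by norm_num)
  have vw1 := t₁₂.apply_ones_le (le_refl 1)
  have vw2 := t₁₂.apply_ones_le (le_refl 2)
  intro k hk1 hk4
  interval_cases k <;> grind [Bool.le_iff_imp]

theorem two_sorted_symm5_classification (h₁ h₂ : BOp 5) :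
    (Symm h₁ ∧ Symm h₂ ∧ Idem h₁ ∧ Idem h₂ ∧
     Tri h₁ h₁ ∧ Tri h₁ h₂ ∧ h₂ = Dual h₂ ∧
     (∀ x y : Bool,
       h₁ (fun i => if i.val < 4 then x else y) = h₁ (fun i => if i.val < 2 then x else y)) ∧
     (∀ x y : Bool,
       h₂ (fun i => if i.val < 4 then x else y) = h₂ (fun i => if i.val < 2 then x else y)))
    ↔
    ((h₁ = mkSym (fun c => decide (c = 5)) ∧
      h₂ = mkSym (fun c => decide (c = 2 ∨ c = 4 ∨ c = 5))) ∨
     (h₁ = mkSym (fun c => decide (c = 5)) ∧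
      h₂ = mkSym (fun c => decide (c = 1 ∨ c = 3 ∨ c = 5)))) := by
  constructor
  · rintro ⟨s₁, s₂, i₁, i₂, t₁₁, t₁₂, d₂, e₁, e₂⟩
    obtain ⟨v42, v13⟩ : h₁ (ones 4) = h₁ (ones 2) ∧ h₁ (ones 1) = h₁ (ones 3) :=
      s₁.apply_ones_eq_of_identity (by norm_num) (by norm_num) e₁
    obtain ⟨w42, w13⟩ : h₂ (ones 4) = h₂ (ones 2) ∧ h₂ (ones 1) = h₂ (ones 3) :=
      s₂.apply_ones_eq_of_identity (by norm_num) (by norm_num) e₂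
    have w32 : h₂ (ones 3) = !h₂ (ones 2) := s₂.apply_ones_eq_not_of_eq_dual d₂ (by norm_num)
    have v_mid := apply_ones_middle_eq_false t₁₁ t₁₂ v42 v13 w13 w32
    have hh₁ : h₁ = mkSym (fun c => decide (c = 5)) := s₁.eq_mkSym fun k hk => by
      interval_cases k <;> simp [i₁.apply_ones_zero, i₁.apply_ones_self, v_mid]
    cases hw2 : h₂ (ones 2)
    · refine .inr ⟨hh₁, s₂.eq_mkSym fun k hk => ?_⟩
      interval_cases k <;> simp [i₂.apply_ones_zero, i₂.apply_ones_self, w13, w32, w42, hw2]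
    · refine .inl ⟨hh₁, s₂.eq_mkSym fun k hk => ?_⟩
      interval_cases k <;> simp [i₂.apply_ones_zero, i₂.apply_ones_self, w13, w32, w42, hw2]
  · rintro (⟨rfl, rfl⟩ | ⟨rfl, rfl⟩) <;>
      exact ⟨symm_mkSym _, symm_mkSym _, idem_mkSym rfl rfl, idem_mkSym rfl rfl,
        tri_mkSym (by decide), tri_mkSym (by decide), mkSym_eq_dual (by decide),
        by decide, by decide⟩
end

section
/- Every minion M with all sets M^(n) finite has a minion core, i.e., there exists a minion N with M ∼ N such that every minion homomorphism N → N is a minion automorphism; moreover the minion core is unique up to minion isomorphism. -/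
/-- An abstract minion: nonempty sets indexed by positive integers with functorial minor maps. -/
structure Minion where
  carrier : ℕ+ → Type
  nonempty : ∀ n : ℕ+, Nonempty (carrier n)
  map : ∀ {n m : ℕ+}, (Fin n → Fin m) → carrier n → carrier m
  map_id : ∀ (n : ℕ+) (f : carrier n), map (id : Fin n → Fin n) f = f
  map_comp : ∀ {n m k : ℕ+} (α : Fin m → Fin k) (β : Fin n → Fin m) (f : carrier n),
    map α (map β f) = map (α ∘ β) f

/-- A minion homomorphism: an arity-preserving family of maps commuting with minor maps. -/
structure MinionHom (M N : Minion) where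
  app : ∀ n : ℕ+, M.carrier n → N.carrier n
  natural : ∀ {n m : ℕ+} (α : Fin n → Fin m) (f : M.carrier n),
    app m (M.map α f) = N.map α (app n f)

/-- `M ∼ N`: minion homomorphisms exist in both directions. -/
def MinionEquiv (M N : Minion) : Prop :=
  Nonempty (MinionHom M N) ∧ Nonempty (MinionHom N M)

/-- Two minions are isomorphic if there is a homomorphism that is bijective in every arity. -/
def MinionIso (M N : Minion) : Prop :=
  ∃ ξ : MinionHom M N, ∀ n : ℕ+, Function.Bijective (ξ.app n)

/-- An endomorphism is an automorphism if it has a two-sided inverse homomorphism. -/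
def IsMinionAut {M : Minion} (ξ : MinionHom M M) : Prop :=
  ∃ μ : MinionHom M M, (∀ (n : ℕ+) (f : M.carrier n), μ.app n (ξ.app n f) = f) ∧
    (∀ (n : ℕ+) (f : M.carrier n), ξ.app n (μ.app n f) = f)

/-- A minion core: every endomorphism is an automorphism. -/
def IsMinionCore (N : Minion) : Prop := ∀ ξ : MinionHom N N, IsMinionAut ξ

namespace MinionCoreAux

/-- Discrete topology on each carrier. -/
instance instTopCarrier (M : Minion) (n : ℕ+) : TopologicalSpace (M.carrier n) := ⊥

instance instDiscCarrier (M : Minion) (n : ℕ+) : DiscreteTopology (M.carrier n) := ⟨rfl⟩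

/-- The space of all arity-preserving self-maps of a minion. -/
abbrev X (M : Minion) := ∀ n : ℕ+, M.carrier n → M.carrier n

instance (M : Minion) : Semigroup (X M) where
  mul f g n := f n ∘ g n
  mul_assoc _ _ _ := rfl

theorem mul_apply {M : Minion} (f g : X M) (n : ℕ+) (x : M.carrier n) :
    (f * g) n x = f n (g n x) := rfl

/-- Naturality predicate: the element of `X M` is a minion endomorphism. -/
def Natl (M : Minion) (f : X M) : Prop :=
  ∀ (n m : ℕ+) (α : Fin n → Fin m) (x : M.carrier n), f m (M.map α x) = M.map α (f n x)

/-- The set of minion endomorphisms inside `X M`. -/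
def Eset (M : Minion) : Set (X M) := {f | Natl M f}

theorem id_mem (M : Minion) : (fun _ => id : X M) ∈ Eset M := fun _ _ _ _ => rfl

theorem mul_mem {M : Minion} {f g : X M} (hf : f ∈ Eset M) (hg : g ∈ Eset M) :
    f * g ∈ Eset M := by
  intro n m α x
  show f m (g m (M.map α x)) = M.map α (f n (g n x))
  rw [hg n m α x, hf n m α (g n x)]

theorem continuous_mul_left {M : Minion} (r : X M) : Continuous (· * r) :=
  continuous_pi fun n => continuous_pi fun x =>
    (continuous_apply (r n x)).comp (continuous_apply n)

theorem isClosed_Eset (M : Minion) : IsClosed (Eset M) := by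
  have h : Eset M = ⋂ (n : ℕ+) (m : ℕ+) (α : Fin n → Fin m) (x : M.carrier n),
      {f : X M | f m (M.map α x) = M.map α (f n x)} := by
    ext f
    simp only [Eset, Natl, Set.mem_iInter, Set.mem_setOf_eq]
  rw [h]
  refine isClosed_iInter fun n => isClosed_iInter fun m =>
    isClosed_iInter fun α => isClosed_iInter fun x => isClosed_eq ?_ ?_
  · exact (continuous_apply (M.map α x)).comp (continuous_apply m)
  · exact (continuous_of_discreteTopology (f := M.map α)).comp
      ((continuous_apply x).comp (continuous_apply n))

set_option maxHeartbeats 1000000 in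
/-- Existence of a "minimal" idempotent endomorphism: an idempotent `e` such that
`e * E * e` is a group with identity `e`. -/
theorem exists_good_idem (M : Minion) (hfin : ∀ n : ℕ+, Finite (M.carrier n)) :
    ∃ e ∈ Eset M, e * e = e ∧ ∀ a ∈ Eset M, ∃ b ∈ Eset M,
      (e * b * e) * (e * a * e) = e ∧ (e * a * e) * (e * b * e) = e := by
  haveI : CompactSpace (X M) := by
    have h : ∀ n : ℕ+, CompactSpace (M.carrier n → M.carrier n) := fun n => by
      haveI := hfin n
      infer_instance
    exact Pi.compactSpace
  -- the poset of nonempty closed left ideals of `Eset M`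
  set C : Set (Set (X M)) :=
    {L | L ⊆ Eset M ∧ L.Nonempty ∧ IsClosed L ∧ ∀ f ∈ Eset M, ∀ g ∈ L, f * g ∈ L} with hC
  have hEC : Eset M ∈ C :=
    ⟨subset_rfl, ⟨_, id_mem M⟩, isClosed_Eset M, fun _ hf _ hg => mul_mem hf hg⟩
  have hchainC : ∀ c ⊆ C, IsChain (· ⊆ ·) c → c.Nonempty →
      ∃ lb ∈ C, ∀ s ∈ c, lb ⊆ s := by
    intro c hcC hchain hcne
    refine ⟨⋂₀ c, ⟨?_, ?_, ?_, ?_⟩, fun s hs => Set.sInter_subset_of_mem hs⟩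
    · obtain ⟨s, hs⟩ := hcne
      exact (Set.sInter_subset_of_mem hs).trans (hcC hs).1
    · haveI : Nonempty c := hcne.to_subtype
      rw [Set.sInter_eq_iInter]
      refine IsCompact.nonempty_iInter_of_directed_nonempty_isCompact_isClosed
        (fun i : c => (i : Set (X M))) ?_ (fun i => (hcC i.2).2.1)
        (fun i => (hcC i.2).2.2.1.isCompact) (fun i => (hcC i.2).2.2.1)
      intro i j
      rcases hchain.total i.2 j.2 with h | h
      · exact ⟨i, subset_rfl, h⟩
      · exact ⟨j, h, subset_rfl⟩
    · exact isClosed_sInter fun s hs => (hcC hs).2.2.1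
    · intro f hf g hg
      rw [Set.mem_sInter] at hg ⊢
      intro s hs
      exact (hcC hs).2.2.2 f hf g (hg s hs)
  obtain ⟨L, -, hLmin⟩ := zorn_superset_nonempty C hchainC (Eset M) hEC
  have hLC : L ∈ C := hLmin.1
  obtain ⟨e, heL, he⟩ := exists_idempotent_in_compact_subsemigroup
    (fun r => continuous_mul_left r) L hLC.2.1 hLC.2.2.1.isCompact
    (fun x hx y hy => hLC.2.2.2 x (hLC.1 hx) y hy)
  have heE : e ∈ Eset M := hLC.1 heL
  -- every element of `e * E * e` has a left inverse there
  have claim : ∀ a ∈ Eset M, ∃ t ∈ Eset M, (e * t * e) * (e * a * e) = e := by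
    intro a ha
    have haeE : e * a * e ∈ Eset M := mul_mem (mul_mem heE ha) heE
    have haeL : e * a * e ∈ L := hLC.2.2.2 (e * a) (mul_mem heE ha) e heL
    set K : Set (X M) := (fun f => f * (e * a * e)) '' Eset M with hK
    have hKC : K ∈ C := by
      refine ⟨?_, ⟨_, ⟨_, id_mem M, rfl⟩⟩, ?_, ?_⟩
      · rintro _ ⟨f, hf, rfl⟩
        exact mul_mem hf haeE
      · exact ((isClosed_Eset M).isCompact.image (continuous_mul_left _)).isClosed
      · rintro f hf _ ⟨g, hg, rfl⟩
        exact ⟨f * g, mul_mem hf hg, (mul_assoc f g _).symm⟩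
    have hKL : K ⊆ L := by
      rintro _ ⟨f, hf, rfl⟩
      exact hLC.2.2.2 f hf _ haeL
    have heK : e ∈ K := hLmin.2 hKC hKL heL
    obtain ⟨t, htE, hte0⟩ := heK
    have hte : t * (e * a * e) = e := hte0
    have h1 : e * (e * a * e) = e * a * e := by
      rw [← mul_assoc, ← mul_assoc, he]
    refine ⟨t, htE, ?_⟩
    calc (e * t * e) * (e * a * e) = (e * t) * (e * (e * a * e)) := by
          rw [mul_assoc (e * t) e (e * a * e)]
      _ = (e * t) * (e * a * e) := by rw [h1]
      _ = e * (t * (e * a * e)) := by rw [mul_assoc]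
      _ = e * e := by rw [hte]
      _ = e := he
  refine ⟨e, heE, he, ?_⟩
  intro a ha
  obtain ⟨t, htE, h1⟩ := claim a ha
  obtain ⟨s, hsE, h2⟩ := claim t htE
  refine ⟨t, htE, h1, ?_⟩
  have hea : e * (e * a * e) = e * a * e := by rw [← mul_assoc, ← mul_assoc, he]
  have het : e * (e * t * e) = e * t * e := by rw [← mul_assoc, ← mul_assoc, he]
  have step : (e * a * e) * (e * t * e) = ((e * s * e) * (e * t * e)) * (e * a * e) * (e * t * e) := by
    rw [h2, hea]
  rw [step, mul_assoc (e * s * e) (e * t * e) (e * a * e), h1,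
    mul_assoc (e * s * e) e (e * t * e), het, h2]

end MinionCoreAux

/-- Composition of minion homomorphisms. -/
def MinionHom.comp {A B C : Minion} (g : MinionHom B C) (f : MinionHom A B) : MinionHom A C where
  app n x := g.app n (f.app n x)
  natural := by
    intro n m α x
    show g.app m (f.app m (A.map α x)) = C.map α (g.app n (f.app n x))
    rw [f.natural, g.natural]

theorem minion_core_exists_unique (M : Minion) (hfin : ∀ n : ℕ+, Finite (M.carrier n)) :
    ∃ N : Minion, MinionEquiv M N ∧ IsMinionCore N ∧
      ∀ N' : Minion, MinionEquiv M N' → IsMinionCore N' → MinionIso N N' := by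
  classical
  obtain ⟨e, heE, he, hgrp⟩ := MinionCoreAux.exists_good_idem M hfin
  have hee : ∀ (n : ℕ+) (x : M.carrier n), e n (e n x) = e n x := by
    intro n x
    exact congrFun (congrFun he n) x
  -- the core: fixed points of `e`
  set N : Minion :=
    { carrier := fun n => {x : M.carrier n // e n x = x}
      nonempty := fun n => ⟨⟨e n (Classical.choice (M.nonempty n)), hee n _⟩⟩
      map := fun {n m} α x => ⟨M.map α x.1, by rw [heE n m α x.1, x.2]⟩
      map_id := fun n x => Subtype.ext (M.map_id n x.1)
      map_comp := fun α β x => Subtype.ext (M.map_comp α β x.1) } with hN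
  have hNmap : ∀ {n m : ℕ+} (α : Fin n → Fin m) (x : N.carrier n),
      (N.map α x).1 = M.map α x.1 := fun _ _ => rfl
  -- homomorphisms in both directions
  have ε : MinionHom M N :=
    { app := fun n x => ⟨e n x, hee n x⟩
      natural := by
        intro n m α x
        exact Subtype.ext (heE n m α x) }
  have ι : MinionHom N M :=
    { app := fun n x => x.1
      natural := fun _ _ => rfl }
  have hcore : IsMinionCore N := by
    intro η
    -- lift η to an endomorphism of M
    set ω : MinionCoreAux.X M := fun n x => (η.app n ⟨e n x, hee n x⟩).1 with hω
    have hωE : ω ∈ MinionCoreAux.Eset M := by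
      intro n m α x
      show (η.app m ⟨e m (M.map α x), _⟩).1 = M.map α (η.app n ⟨e n x, _⟩).1
      have h1 : (⟨e m (M.map α x), hee m _⟩ : N.carrier m) =
          N.map α ⟨e n x, hee n x⟩ := Subtype.ext (heE n m α x)
      rw [h1, η.natural α]
    obtain ⟨b, hbE, hba, hab⟩ := hgrp ω hωE
    set A : MinionCoreAux.X M := e * ω * e with hA
    set B : MinionCoreAux.X M := e * b * e with hB
    have hAE : A ∈ MinionCoreAux.Eset M :=
      MinionCoreAux.mul_mem (MinionCoreAux.mul_mem heE hωE) heE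
    have hBE : B ∈ MinionCoreAux.Eset M :=
      MinionCoreAux.mul_mem (MinionCoreAux.mul_mem heE hbE) heE
    have heB : ∀ (n : ℕ+) (x : M.carrier n), e n (B n x) = B n x := by
      intro n x
      show (e * B) n x = B n x
      have : e * B = B := by rw [hB, ← mul_assoc, ← mul_assoc, he]
      rw [this]
    -- the key identity: A agrees with η on N
    have hkey : ∀ (n : ℕ+) (y : N.carrier n), A n y.1 = (η.app n y).1 := by
      intro n y
      show e n (ω n (e n y.1)) = (η.app n y).1
      rw [y.2]
      show e n ((η.app n ⟨e n y.1, hee n y.1⟩).1) = (η.app n y).1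
      have h1 : (⟨e n y.1, hee n y.1⟩ : N.carrier n) = y := Subtype.ext y.2
      rw [h1]
      exact (η.app n y).2
    have hBA : ∀ (n : ℕ+) (x : M.carrier n), B n (A n x) = e n x := by
      intro n x
      exact congrFun (congrFun hba n) x
    have hAB : ∀ (n : ℕ+) (x : M.carrier n), A n (B n x) = e n x := by
      intro n x
      exact congrFun (congrFun hab n) x
    refine ⟨{ app := fun n y => ⟨B n y.1, heB n y.1⟩
              natural := by
                intro n m α y
                exact Subtype.ext (hBE n m α y.1) }, ?_, ?_⟩
    · intro n y
      apply Subtype.ext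
      show B n ((η.app n y).1) = y.1
      rw [← hkey n y, hBA n y.1, y.2]
    · intro n y
      apply Subtype.ext
      show (η.app n ⟨B n y.1, heB n y.1⟩).1 = y.1
      rw [← hkey n ⟨B n y.1, heB n y.1⟩]
      show A n (B n y.1) = y.1
      rw [hAB n y.1, y.2]
  refine ⟨N, ⟨⟨ε⟩, ⟨ι⟩⟩, hcore, ?_⟩
  intro N' hMN' hcore'
  obtain ⟨⟨r⟩, ⟨s⟩⟩ := hMN'
  set f : MinionHom N N' := r.comp ι with hf
  set g : MinionHom N' N := ε.comp s with hg
  obtain ⟨μ, hμ1, hμ2⟩ := hcore (g.comp f)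
  obtain ⟨ν, hν1, hν2⟩ := hcore' (f.comp g)
  refine ⟨f, fun n => ⟨?_, ?_⟩⟩
  · intro x y hxy
    have h1 : μ.app n ((g.comp f).app n x) = μ.app n ((g.comp f).app n y) := by
      show μ.app n (g.app n (f.app n x)) = μ.app n (g.app n (f.app n y))
      rw [hxy]
    rwa [hμ1, hμ1] at h1
  · intro y
    exact ⟨g.app n (ν.app n y), hν2 n y⟩
end

section
/- Let M be a minion such that every set M^(n) is finite, and suppose there exists m such that every minion homomorphism ξ : M → M restricts to a bijection ξ^(m) : M^(m) → M^(m), and moreover any two minion homomorphisms M → M agreeing on M^(m) are equal. Then M is a minion core: every minion homomorphism M → M is an automorphism. -/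
open Function

theorem MonoidHom.isUnit_of_bijective_apply {N α : Type*} [Monoid N] [Finite α]
    (φ : N →* Function.End α) (hφ : Injective φ) {x : N} (hx : Bijective (φ x)) : IsUnit x := by
  have hφx : IsOfFinOrder (φ x) :=
    ((Units.coeHom _).comp Equiv.Perm.equivUnitsEnd.toMonoidHom).isOfFinOrder
      (isOfFinOrder_of_finite (Equiv.ofBijective _ hx))
  exact (hφ.isOfFinOrder_iff.1 hφx).isUnit

namespace MinionHom

protected def id (M : Minion) : MinionHom M M where
  app _ := id
  natural _ _ := rfl

def comp_s19 {M N K : Minion} (ξ : MinionHom N K) (ν : MinionHom M N) : MinionHom M K where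
  app n := ξ.app n ∘ ν.app n
  natural α f := by simp only [Function.comp_apply, ν.natural, ξ.natural]

variable {M : Minion}

instance : Monoid (MinionHom M M) where
  mul := comp_s19
  one := MinionHom.id M
  mul_assoc _ _ _ := rfl
  one_mul _ := rfl
  mul_one _ := rfl

theorem mul_app (ξ ν : MinionHom M M) (n : ℕ+) (f : M.carrier n) :
    (ξ * ν).app n f = ξ.app n (ν.app n f) :=
  rfl

theorem one_app (n : ℕ+) (f : M.carrier n) : (1 : MinionHom M M).app n f = f :=
  rfl

def appHom (n : ℕ+) : MinionHom M M →* Function.End (M.carrier n) where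
  toFun ξ := ξ.app n
  map_one' := rfl
  map_mul' _ _ := rfl

theorem isMinionAut_of_isUnit {ξ : MinionHom M M} (hξ : IsUnit ξ) : IsMinionAut ξ := by
  obtain ⟨u, rfl⟩ := hξ
  refine ⟨↑u⁻¹, fun n f => ?_, fun n f => ?_⟩
  · rw [← mul_app, u.inv_mul, one_app]
  · rw [← mul_app, u.mul_inv, one_app]

end MinionHom

theorem core_of_bijective_on_level (M : Minion) (hfin : ∀ n : ℕ+, Finite (M.carrier n))
    (m : ℕ+)
    (hbij : ∀ ξ : MinionHom M M, Function.Bijective (ξ.app m))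
    (hext : ∀ ξ ν : MinionHom M M, ξ.app m = ν.app m → ξ = ν) :
    IsMinionCore M := by
  have : Finite (M.carrier m) := hfin m
  intro ξ
  exact MinionHom.isMinionAut_of_isUnit <|
    (MinionHom.appHom m).isUnit_of_bijective_apply hext (hbij ξ)
end
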